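/- arXiv:1611.00181 — 2 statements merged into one kernel-verified Lean document; each statement's English description precedes it below -/
import Mathlib

section
/- Let v ∈ L³(ℝ³;ℝ³) ∩ L²(ℝ³;ℝ³) be weakly divergence-free and let φ_ε be an even mollifier. Define J_ε(v) = ∫∫ ∇φ_ε(ξ) · (v(x+ξ) - v(x)) |v(x+ξ) - v(x)|² dξ dx. Then (1/2) J_ε(v) = ⟨∇·[v⊗v]_ε, v⟩ − ⟨v⊗v : ∇v_ε⟩, where [·]_ε denotes spatial mollification with φ_ε. -/
open MeasureTheory RealInnerProductSpace
open scoped ENNReal Convolution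

namespace DRaux

noncomputable section

local notation "E" => EuclideanSpace ℝ (Fin 3)

lemma amgm (a b : ℝ) : |a * b| ≤ (a ^ 2 + b ^ 2) / 2 := by
  rw [abs_mul]
  nlinarith [sq_nonneg (|a| - |b|), sq_abs a, sq_abs b, abs_nonneg a, abs_nonneg b]

lemma expand6 (k a b : E) :
    ⟪k, a - b⟫ * ‖a - b‖ ^ 2
      = ⟪k, a⟫ * ‖a‖ ^ 2 - ⟪k, b⟫ * ‖a‖ ^ 2 - 2 * (⟪k, a⟫ * ⟪a, b⟫)
        + 2 * (⟪k, b⟫ * ⟪a, b⟫) + ⟪k, a⟫ * ‖b‖ ^ 2 - ⟪k, b⟫ * ‖b‖ ^ 2 := by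
  rw [norm_sub_sq_real, inner_sub_right]; ring

lemma coord_le (a : E) (i : Fin 3) : |a i| ≤ ‖a‖ := by
  have h := abs_real_inner_le_norm a (EuclideanSpace.single i (1 : ℝ))
  simpa [EuclideanSpace.inner_single_right, EuclideanSpace.norm_single] using h

lemma inner_gradient (f : E → ℝ) (u w : E) : ⟪gradient f u, w⟫ = fderiv ℝ f u w := by
  rw [gradient, InnerProductSpace.toDual_symm_apply]

lemma inner_sum_eq (a b : E) : ⟪a, b⟫ = ∑ i : Fin 3, a i * b i := by
  simp [PiLp.inner_apply, RCLike.inner_apply, conj_trivial, mul_comm]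

lemma integrable_prod_left_slices {f : E × E → ℝ}
    (hf : AEStronglyMeasurable f ((volume : Measure E).prod volume))
    {g : E → ℝ} (hg : Integrable g)
    (h1 : ∀ z, Integrable (fun x => f (x, z)))
    (h2 : ∀ z, ∫ x, ‖f (x, z)‖ ≤ g z) :
    Integrable f ((volume : Measure E).prod volume) := by
  rw [integrable_prod_iff' hf]
  refine ⟨Filter.Eventually.of_forall h1, ?_⟩
  have hm : AEStronglyMeasurable (fun z => ∫ x, ‖f (x, z)‖) (volume : Measure E) := by
    have := (hf.norm.prod_swap).integral_prod_right'
    simpa using this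
  refine Integrable.mono' hg hm (Filter.Eventually.of_forall fun z => ?_)
  rw [Real.norm_eq_abs, abs_of_nonneg (integral_nonneg fun x => norm_nonneg _)]
  exact h2 z

lemma integrable_prod_right_slices {f : E × E → ℝ}
    (hf : AEStronglyMeasurable f ((volume : Measure E).prod volume))
    {g : E → ℝ} (hg : Integrable g)
    (h1 : ∀ x, Integrable (fun z => f (x, z)))
    (h2 : ∀ x, ∫ z, ‖f (x, z)‖ ≤ g x) :
    Integrable f ((volume : Measure E).prod volume) := by
  rw [integrable_prod_iff hf]
  refine ⟨Filter.Eventually.of_forall h1, ?_⟩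
  refine Integrable.mono' hg hf.norm.integral_prod_right'
    (Filter.Eventually.of_forall fun x => ?_)
  rw [Real.norm_eq_abs, abs_of_nonneg (integral_nonneg fun z => norm_nonneg _)]
  exact h2 x

lemma fderiv_mollify (φε : E → ℝ) (hsm : ContDiff ℝ (⊤ : ℕ∞) φε) (hsupp : HasCompactSupport φε)
    (f : E → ℝ) (hf : LocallyIntegrable f (volume : Measure E)) (x w : E) :
    fderiv ℝ (fun y => ∫ z, φε (y - z) * f z) x w
      = ∫ z, f z * fderiv ℝ φε (x - z) w := by
  have heq : (fun y => ∫ z, φε (y - z) * f z)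
      = (f ⋆[ContinuousLinearMap.mul ℝ ℝ, (volume : Measure E)] φε) := by
    funext y
    rw [convolution_def]
    simp only [ContinuousLinearMap.mul_apply', mul_comm]
  have hder := (hsupp.hasFDerivAt_convolution_right (ContinuousLinearMap.mul ℝ ℝ)
    hf (hsm.of_le (by simp)) x).fderiv
  rw [heq, hder]
  have happ := convolution_precompR_apply (L := ContinuousLinearMap.mul ℝ ℝ)
    hf (hsupp.fderiv ℝ) (hsm.continuous_fderiv (by simp)) x w
  rw [happ, convolution_def]
  simp only [ContinuousLinearMap.mul_apply']

theorem DRcore (K : E → E) (hKc : Continuous K) (hKs : HasCompactSupport K)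
    (hKodd : ∀ u, K (-u) = -K u)
    (v : E → E) (hv3 : MemLp v 3 (volume : Measure E)) (hv2 : MemLp v 2 (volume : Measure E))
    (hdivK : ∀ x, ∫ z, ⟪v z, K (x - z)⟫ = 0) :
    (1 / 2 : ℝ) * (∫ x, ∫ ξ, ⟪K ξ, v (x + ξ) - v x⟫ * ‖v (x + ξ) - v x‖ ^ 2)
      = (∫ x, ∫ z, ⟪v z, v x⟫ * ⟪v z, K (x - z)⟫)
        - ∫ x, ∫ z, ⟪v x, v z⟫ * ⟪v x, K (x - z)⟫ := by
  obtain ⟨C, hC⟩ := hKc.bounded_above_of_compact_support hKs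
  have hC0 : (0 : ℝ) ≤ C := (norm_nonneg _).trans (hC 0)
  have hvm : AEStronglyMeasurable v (volume : Measure E) := hv2.aestronglyMeasurable
  have hKint : Integrable K (volume : Measure E) := hKc.integrable_of_hasCompactSupport hKs
  have hK2 : Integrable (fun u => ‖K u‖ ^ 2) (volume : Measure E) :=
    (hKc.norm.pow 2).integrable_of_hasCompactSupport
      (hKs.mono (fun u hu => by simpa using hu))
  have n2 : Integrable (fun z => ‖v z‖ ^ 2) (volume : Measure E) := by
    have h := hv2.integrable_norm_rpow (by norm_num) (by norm_num)
    have heq : (fun z : E => ‖v z‖ ^ (2 : ℕ)) = fun z => ‖v z‖ ^ ((2 : ℝ≥0∞)).toReal := by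
      funext z
      rw [ENNReal.toReal_ofNat, show ((2 : ℝ)) = ((2 : ℕ) : ℝ) by norm_num, Real.rpow_natCast]
    rw [heq]; exact h
  have n3 : Integrable (fun z => ‖v z‖ ^ 3) (volume : Measure E) := by
    have h := hv3.integrable_norm_rpow (by norm_num) (by norm_num)
    have heq : (fun z : E => ‖v z‖ ^ (3 : ℕ)) = fun z => ‖v z‖ ^ ((3 : ℝ≥0∞)).toReal := by
      funext z
      rw [ENNReal.toReal_ofNat, show ((3 : ℝ)) = ((3 : ℕ) : ℝ) by norm_num, Real.rpow_natCast]
    rw [heq]; exact h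
  have hK0 : (∫ u, K u) = 0 := by
    have h1 : (∫ u, K (-u)) = ∫ u, K u := integral_neg_eq_self K volume
    have h2 : (∫ u, K (-u)) = -∫ u, K u := by
      rw [show (fun u => K (-u)) = fun u => -K u from funext hKodd, integral_neg]
    have h : (∫ u, K u) = -∫ u, K u := h1.symm.trans h2
    have h3 : (∫ u, K u) + (∫ u, K u) = 0 := by nth_rewrite 2 [h]; exact add_neg_cancel _
    have h4 : (2 : ℝ) • (∫ u, K u) = 0 := by rw [two_smul]; exact h3
    exact (smul_eq_zero.mp h4).resolve_left (by norm_num)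
  -- slice integrability with AM-GM
  set C₀ : ℝ := ((∫ u, ‖K u‖ ^ 2) + ∫ z, ‖v z‖ ^ 2) / 2 with hC₀
  have mKzL : ∀ z : E, Continuous fun x : E => K (z - x) :=
    fun z => hKc.comp (continuous_const.sub continuous_id)
  have mKzR : ∀ x : E, Continuous fun z : E => K (z - x) :=
    fun x => hKc.comp (continuous_id.sub continuous_const)
  have slice_x : ∀ z : E, Integrable (fun x => ‖K (z - x)‖ * ‖v x‖) (volume : Measure E) := by
    intro z
    refine Integrable.mono' (((hK2.comp_sub_left z).add n2).div_const 2)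
      ((mKzL z).norm.aestronglyMeasurable.mul hvm.norm)
      (Filter.Eventually.of_forall fun x => ?_)
    rw [Real.norm_eq_abs]
    exact amgm _ _
  have slice_x_bd : ∀ z : E, (∫ x, ‖K (z - x)‖ * ‖v x‖) ≤ C₀ := by
    intro z
    have hmono : (∫ x, ‖K (z - x)‖ * ‖v x‖)
        ≤ ∫ x, (‖K (z - x)‖ ^ 2 + ‖v x‖ ^ 2) / 2 := by
      refine integral_mono (slice_x z) (((hK2.comp_sub_left z).add n2).div_const 2) fun x => ?_
      have h := amgm (‖K (z - x)‖) (‖v x‖)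
      rwa [abs_of_nonneg (mul_nonneg (norm_nonneg _) (norm_nonneg _))] at h
    refine hmono.trans ?_
    rw [integral_div, integral_add (hK2.comp_sub_left z) n2,
      integral_sub_left_eq_self (fun u => ‖K u‖ ^ 2) volume z]
  have slice_z : ∀ x : E, Integrable (fun z => ‖K (z - x)‖ * ‖v z‖) (volume : Measure E) := by
    intro x
    refine Integrable.mono' (((hK2.comp_sub_right x).add n2).div_const 2)
      ((mKzR x).norm.aestronglyMeasurable.mul hvm.norm)
      (Filter.Eventually.of_forall fun z => ?_)
    rw [Real.norm_eq_abs]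
    exact amgm _ _
  have slice_z_bd : ∀ x : E, (∫ z, ‖K (z - x)‖ * ‖v z‖) ≤ C₀ := by
    intro x
    have hmono : (∫ z, ‖K (z - x)‖ * ‖v z‖)
        ≤ ∫ z, (‖K (z - x)‖ ^ 2 + ‖v z‖ ^ 2) / 2 := by
      refine integral_mono (slice_z x) (((hK2.comp_sub_right x).add n2).div_const 2) fun z => ?_
      have h := amgm (‖K (z - x)‖) (‖v z‖)
      rwa [abs_of_nonneg (mul_nonneg (norm_nonneg _) (norm_nonneg _))] at h
    refine hmono.trans ?_
    rw [integral_div, integral_add (hK2.comp_sub_right x) n2,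
      integral_sub_right_eq_self (fun u => ‖K u‖ ^ 2) x]
  -- the per-x expansion of the inner integral
  have key : ∀ x : E, (∫ ξ, ⟪K ξ, v (x + ξ) - v x⟫ * ‖v (x + ξ) - v x‖ ^ 2)
      = (∫ z, ⟪K (z - x), v z⟫ * ‖v z‖ ^ 2) - (∫ z, ⟪K (z - x), v x⟫ * ‖v z‖ ^ 2)
        - 2 * (∫ z, ⟪K (z - x), v z⟫ * ⟪v z, v x⟫)
        + 2 * (∫ z, ⟪K (z - x), v x⟫ * ⟪v z, v x⟫) := by
    intro x
    have mI1 : AEStronglyMeasurable (fun z => ⟪K (z - x), v z⟫) (volume : Measure E) :=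
      (mKzR x).aestronglyMeasurable.inner hvm
    have mI2 : AEStronglyMeasurable (fun z => ⟪K (z - x), v x⟫) (volume : Measure E) :=
      (mKzR x).aestronglyMeasurable.inner aestronglyMeasurable_const
    have mvv : AEStronglyMeasurable (fun z => ⟪v z, v x⟫) (volume : Measure E) :=
      hvm.inner aestronglyMeasurable_const
    have mn2 : AEStronglyMeasurable (fun z => ‖v z‖ ^ 2) (volume : Measure E) := by
      exact hvm.norm.pow 2
    have i1 : Integrable (fun z => ⟪K (z - x), v z⟫ * ‖v z‖ ^ 2) (volume : Measure E) := by
      refine Integrable.mono' (n3.const_mul C) (mI1.mul mn2)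
        (Filter.Eventually.of_forall fun z => ?_)
      rw [Real.norm_eq_abs, abs_mul, abs_of_nonneg (by positivity : (0:ℝ) ≤ ‖v z‖ ^ 2)]
      calc |⟪K (z - x), v z⟫| * ‖v z‖ ^ 2 ≤ (‖K (z - x)‖ * ‖v z‖) * ‖v z‖ ^ 2 := by
            gcongr; exact abs_real_inner_le_norm _ _
        _ ≤ (C * ‖v z‖) * ‖v z‖ ^ 2 := by gcongr; exact hC _
        _ = C * ‖v z‖ ^ 3 := by ring
    have i2 : Integrable (fun z => ⟪K (z - x), v x⟫ * ‖v z‖ ^ 2) (volume : Measure E) := by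
      refine Integrable.mono' (n2.const_mul (C * ‖v x‖)) (mI2.mul mn2)
        (Filter.Eventually.of_forall fun z => ?_)
      rw [Real.norm_eq_abs, abs_mul, abs_of_nonneg (by positivity : (0:ℝ) ≤ ‖v z‖ ^ 2)]
      calc |⟪K (z - x), v x⟫| * ‖v z‖ ^ 2 ≤ (‖K (z - x)‖ * ‖v x‖) * ‖v z‖ ^ 2 := by
            gcongr; exact abs_real_inner_le_norm _ _
        _ ≤ (C * ‖v x‖) * ‖v z‖ ^ 2 := by gcongr; exact hC _
    have i3 : Integrable (fun z => ⟪K (z - x), v z⟫ * ⟪v z, v x⟫) (volume : Measure E) := by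
      refine Integrable.mono' (n2.const_mul (C * ‖v x‖)) (mI1.mul mvv)
        (Filter.Eventually.of_forall fun z => ?_)
      rw [Real.norm_eq_abs, abs_mul]
      calc |⟪K (z - x), v z⟫| * |⟪v z, v x⟫|
          ≤ (‖K (z - x)‖ * ‖v z‖) * (‖v z‖ * ‖v x‖) := by
            gcongr <;> [exact abs_real_inner_le_norm _ _; exact abs_real_inner_le_norm _ _]
        _ ≤ (C * ‖v z‖) * (‖v z‖ * ‖v x‖) := by gcongr; exact hC _
        _ = C * ‖v x‖ * ‖v z‖ ^ 2 := by ring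
    have i4 : Integrable (fun z => ⟪K (z - x), v x⟫ * ⟪v z, v x⟫) (volume : Measure E) := by
      refine Integrable.mono' ((slice_z x).const_mul (‖v x‖ ^ 2)) (mI2.mul mvv)
        (Filter.Eventually.of_forall fun z => ?_)
      rw [Real.norm_eq_abs, abs_mul]
      calc |⟪K (z - x), v x⟫| * |⟪v z, v x⟫|
          ≤ (‖K (z - x)‖ * ‖v x‖) * (‖v z‖ * ‖v x‖) := by
            gcongr <;> [exact abs_real_inner_le_norm _ _; exact abs_real_inner_le_norm _ _]
        _ = ‖v x‖ ^ 2 * (‖K (z - x)‖ * ‖v z‖) := by ring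
    have i5 : Integrable (fun z => ⟪K (z - x), v z⟫ * ‖v x‖ ^ 2) (volume : Measure E) := by
      refine Integrable.mono' ((slice_z x).const_mul (‖v x‖ ^ 2)) (mI1.mul aestronglyMeasurable_const)
        (Filter.Eventually.of_forall fun z => ?_)
      rw [Real.norm_eq_abs, abs_mul, abs_of_nonneg (by positivity : (0:ℝ) ≤ ‖v x‖ ^ 2)]
      calc |⟪K (z - x), v z⟫| * ‖v x‖ ^ 2 ≤ (‖K (z - x)‖ * ‖v z‖) * ‖v x‖ ^ 2 := by
            gcongr; exact abs_real_inner_le_norm _ _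
        _ = ‖v x‖ ^ 2 * (‖K (z - x)‖ * ‖v z‖) := by ring
    have i6 : Integrable (fun z => ⟪K (z - x), v x⟫ * ‖v x‖ ^ 2) (volume : Measure E) := by
      refine Integrable.mono' ((hKint.norm.comp_sub_right x).const_mul (‖v x‖ ^ 3))
        (mI2.mul aestronglyMeasurable_const) (Filter.Eventually.of_forall fun z => ?_)
      rw [Real.norm_eq_abs, abs_mul, abs_of_nonneg (by positivity : (0:ℝ) ≤ ‖v x‖ ^ 2)]
      calc |⟪K (z - x), v x⟫| * ‖v x‖ ^ 2 ≤ (‖K (z - x)‖ * ‖v x‖) * ‖v x‖ ^ 2 := by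
            gcongr; exact abs_real_inner_le_norm _ _
        _ = ‖v x‖ ^ 3 * ‖K (z - x)‖ := by ring
    have hcv : (∫ ξ, ⟪K ξ, v (x + ξ) - v x⟫ * ‖v (x + ξ) - v x‖ ^ 2)
        = ∫ z, ⟪K (z - x), v z - v x⟫ * ‖v z - v x‖ ^ 2 := by
      rw [← integral_add_left_eq_self (fun z : E => ⟪K (z - x), v z - v x⟫ * ‖v z - v x‖ ^ 2) x]
      simp only [add_sub_cancel_left]
    rw [hcv]
    have hsplit : (fun z => ⟪K (z - x), v z - v x⟫ * ‖v z - v x‖ ^ 2)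
        = fun z => ⟪K (z - x), v z⟫ * ‖v z‖ ^ 2 - ⟪K (z - x), v x⟫ * ‖v z‖ ^ 2
            - 2 * (⟪K (z - x), v z⟫ * ⟪v z, v x⟫) + 2 * (⟪K (z - x), v x⟫ * ⟪v z, v x⟫)
            + ⟪K (z - x), v z⟫ * ‖v x‖ ^ 2 - ⟪K (z - x), v x⟫ * ‖v x‖ ^ 2 :=
      funext fun z => expand6 _ _ _
    have j3 : Integrable (fun z => 2 * (⟪K (z - x), v z⟫ * ⟪v z, v x⟫)) (volume : Measure E) := by
      exact i3.const_mul 2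
    have j4 : Integrable (fun z => 2 * (⟪K (z - x), v x⟫ * ⟪v z, v x⟫)) (volume : Measure E) := by
      exact i4.const_mul 2
    have j12 : Integrable (fun z => ⟪K (z - x), v z⟫ * ‖v z‖ ^ 2
        - ⟪K (z - x), v x⟫ * ‖v z‖ ^ 2) (volume : Measure E) := by exact i1.sub i2
    have j123 : Integrable (fun z => ⟪K (z - x), v z⟫ * ‖v z‖ ^ 2
        - ⟪K (z - x), v x⟫ * ‖v z‖ ^ 2
        - 2 * (⟪K (z - x), v z⟫ * ⟪v z, v x⟫)) (volume : Measure E) := by exact j12.sub j3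
    have j1234 : Integrable (fun z => ⟪K (z - x), v z⟫ * ‖v z‖ ^ 2
        - ⟪K (z - x), v x⟫ * ‖v z‖ ^ 2
        - 2 * (⟪K (z - x), v z⟫ * ⟪v z, v x⟫)
        + 2 * (⟪K (z - x), v x⟫ * ⟪v z, v x⟫)) (volume : Measure E) := by exact j123.add j4
    have j12345 : Integrable (fun z => ⟪K (z - x), v z⟫ * ‖v z‖ ^ 2
        - ⟪K (z - x), v x⟫ * ‖v z‖ ^ 2
        - 2 * (⟪K (z - x), v z⟫ * ⟪v z, v x⟫)
        + 2 * (⟪K (z - x), v x⟫ * ⟪v z, v x⟫)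
        + ⟪K (z - x), v z⟫ * ‖v x‖ ^ 2) (volume : Measure E) := by exact j1234.add i5
    rw [hsplit, integral_sub j12345 i6, integral_add j1234 i5, integral_add j123 j4,
      integral_sub j12 j3, integral_sub i1 i2, integral_const_mul, integral_const_mul]
    have z5 : (∫ z, ⟪K (z - x), v z⟫ * ‖v x‖ ^ 2) = 0 := by
      rw [integral_mul_const]
      have h0 : (∫ z, ⟪K (z - x), v z⟫) = 0 := by
        have heq : (fun z => ⟪K (z - x), v z⟫) = fun z => -⟪v z, K (x - z)⟫ := by
          funext z
          rw [real_inner_comm, show z - x = -(x - z) by abel, hKodd, inner_neg_right]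
        rw [heq, integral_neg, hdivK x, neg_zero]
      rw [h0, zero_mul]
    have z6 : (∫ z, ⟪K (z - x), v x⟫ * ‖v x‖ ^ 2) = 0 := by
      rw [integral_mul_const]
      have h0 : (∫ z, ⟪K (z - x), v x⟫) = 0 := by
        have heq : (fun z => ⟪K (z - x), v x⟫) = fun z => ⟪v x, K (z - x)⟫ :=
          funext fun z => real_inner_comm _ _
        rw [heq, integral_inner (hKint.comp_sub_right x),
          integral_sub_right_eq_self K x, hK0, inner_zero_right]
      rw [h0, zero_mul]
    rw [z5, z6]; ring
  -- product measurability
  have mprod_K : Continuous (fun p : E × E => K (p.2 - p.1)) :=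
    hKc.comp (continuous_snd.sub continuous_fst)
  have mv1 : AEStronglyMeasurable (fun p : E × E => v p.1) ((volume : Measure E).prod volume) :=
    hvm.comp_fst
  have mv2 : AEStronglyMeasurable (fun p : E × E => v p.2) ((volume : Measure E).prod volume) :=
    hvm.comp_snd
  have mn2p : AEStronglyMeasurable (fun p : E × E => ‖v p.2‖ ^ 2)
      ((volume : Measure E).prod volume) := by
    exact mv2.norm.pow 2
  -- product integrability
  have D1 : Integrable (fun p : E × E => ⟪K (p.2 - p.1), v p.2⟫ * ‖v p.2‖ ^ 2)
      ((volume : Measure E).prod volume) := by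
    have islice : ∀ z : E, Integrable (fun x => ⟪K (z - x), v z⟫ * ‖v z‖ ^ 2)
        (volume : Measure E) := by
      intro z
      refine Integrable.mono' ((hKint.norm.comp_sub_left z).const_mul (‖v z‖ ^ 3))
        (((mKzL z).aestronglyMeasurable.inner aestronglyMeasurable_const).mul
          aestronglyMeasurable_const) (Filter.Eventually.of_forall fun x => ?_)
      rw [Real.norm_eq_abs, abs_mul, abs_of_nonneg (by positivity : (0:ℝ) ≤ ‖v z‖ ^ 2)]
      calc |⟪K (z - x), v z⟫| * ‖v z‖ ^ 2 ≤ (‖K (z - x)‖ * ‖v z‖) * ‖v z‖ ^ 2 := by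
            gcongr; exact abs_real_inner_le_norm _ _
        _ = ‖v z‖ ^ 3 * ‖K (z - x)‖ := by ring
    refine integrable_prod_left_slices
      ((mprod_K.aestronglyMeasurable.inner mv2).mul mn2p)
      (g := fun z => ‖v z‖ ^ 3 * ∫ u, ‖K u‖) (n3.mul_const _) islice (fun z => ?_)
    calc (∫ x, ‖⟪K (z - x), v z⟫ * ‖v z‖ ^ 2‖)
        ≤ ∫ x, ‖v z‖ ^ 3 * ‖K (z - x)‖ := by
          refine integral_mono (islice z).norm
            ((hKint.norm.comp_sub_left z).const_mul (‖v z‖ ^ 3)) fun x => ?_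
          rw [Real.norm_eq_abs, abs_mul, abs_of_nonneg (by positivity : (0:ℝ) ≤ ‖v z‖ ^ 2)]
          calc |⟪K (z - x), v z⟫| * ‖v z‖ ^ 2 ≤ (‖K (z - x)‖ * ‖v z‖) * ‖v z‖ ^ 2 := by
                gcongr; exact abs_real_inner_le_norm _ _
            _ = ‖v z‖ ^ 3 * ‖K (z - x)‖ := by ring
      _ = ‖v z‖ ^ 3 * ∫ x, ‖K (z - x)‖ := integral_const_mul _ _
      _ = ‖v z‖ ^ 3 * ∫ u, ‖K u‖ := by
          rw [integral_sub_left_eq_self (fun u => ‖K u‖) volume z]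
  have D2 : Integrable (fun p : E × E => ⟪K (p.2 - p.1), v p.1⟫ * ‖v p.2‖ ^ 2)
      ((volume : Measure E).prod volume) := by
    have islice : ∀ z : E, Integrable (fun x => ⟪K (z - x), v x⟫ * ‖v z‖ ^ 2)
        (volume : Measure E) := by
      intro z
      refine Integrable.mono' ((slice_x z).const_mul (‖v z‖ ^ 2))
        (((mKzL z).aestronglyMeasurable.inner hvm).mul aestronglyMeasurable_const)
        (Filter.Eventually.of_forall fun x => ?_)
      rw [Real.norm_eq_abs, abs_mul, abs_of_nonneg (by positivity : (0:ℝ) ≤ ‖v z‖ ^ 2)]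
      calc |⟪K (z - x), v x⟫| * ‖v z‖ ^ 2 ≤ (‖K (z - x)‖ * ‖v x‖) * ‖v z‖ ^ 2 := by
            gcongr; exact abs_real_inner_le_norm _ _
        _ = ‖v z‖ ^ 2 * (‖K (z - x)‖ * ‖v x‖) := by ring
    refine integrable_prod_left_slices
      ((mprod_K.aestronglyMeasurable.inner mv1).mul mn2p)
      (g := fun z => ‖v z‖ ^ 2 * C₀) (n2.mul_const _) islice (fun z => ?_)
    calc (∫ x, ‖⟪K (z - x), v x⟫ * ‖v z‖ ^ 2‖)
        ≤ ∫ x, ‖v z‖ ^ 2 * (‖K (z - x)‖ * ‖v x‖) := by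
          refine integral_mono (islice z).norm ((slice_x z).const_mul (‖v z‖ ^ 2)) fun x => ?_
          rw [Real.norm_eq_abs, abs_mul, abs_of_nonneg (by positivity : (0:ℝ) ≤ ‖v z‖ ^ 2)]
          calc |⟪K (z - x), v x⟫| * ‖v z‖ ^ 2 ≤ (‖K (z - x)‖ * ‖v x‖) * ‖v z‖ ^ 2 := by
                gcongr; exact abs_real_inner_le_norm _ _
            _ = ‖v z‖ ^ 2 * (‖K (z - x)‖ * ‖v x‖) := by ring
      _ = ‖v z‖ ^ 2 * ∫ x, ‖K (z - x)‖ * ‖v x‖ := integral_const_mul _ _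
      _ ≤ ‖v z‖ ^ 2 * C₀ := by
          exact mul_le_mul_of_nonneg_left (slice_x_bd z) (by positivity)
  have D3 : Integrable (fun p : E × E => ⟪K (p.2 - p.1), v p.2⟫ * ⟪v p.2, v p.1⟫)
      ((volume : Measure E).prod volume) := by
    have islice : ∀ z : E, Integrable (fun x => ⟪K (z - x), v z⟫ * ⟪v z, v x⟫)
        (volume : Measure E) := by
      intro z
      refine Integrable.mono' ((slice_x z).const_mul (‖v z‖ ^ 2))
        (((mKzL z).aestronglyMeasurable.inner aestronglyMeasurable_const).mul
          (aestronglyMeasurable_const.inner hvm))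
        (Filter.Eventually.of_forall fun x => ?_)
      rw [Real.norm_eq_abs, abs_mul]
      calc |⟪K (z - x), v z⟫| * |⟪v z, v x⟫|
          ≤ (‖K (z - x)‖ * ‖v z‖) * (‖v z‖ * ‖v x‖) := by
            gcongr <;> [exact abs_real_inner_le_norm _ _; exact abs_real_inner_le_norm _ _]
        _ = ‖v z‖ ^ 2 * (‖K (z - x)‖ * ‖v x‖) := by ring
    refine integrable_prod_left_slices
      ((mprod_K.aestronglyMeasurable.inner mv2).mul (mv2.inner mv1))
      (g := fun z => ‖v z‖ ^ 2 * C₀) (n2.mul_const _) islice (fun z => ?_)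
    calc (∫ x, ‖⟪K (z - x), v z⟫ * ⟪v z, v x⟫‖)
        ≤ ∫ x, ‖v z‖ ^ 2 * (‖K (z - x)‖ * ‖v x‖) := by
          refine integral_mono (islice z).norm ((slice_x z).const_mul (‖v z‖ ^ 2)) fun x => ?_
          rw [Real.norm_eq_abs, abs_mul]
          calc |⟪K (z - x), v z⟫| * |⟪v z, v x⟫|
              ≤ (‖K (z - x)‖ * ‖v z‖) * (‖v z‖ * ‖v x‖) := by
                gcongr <;> [exact abs_real_inner_le_norm _ _; exact abs_real_inner_le_norm _ _]
            _ = ‖v z‖ ^ 2 * (‖K (z - x)‖ * ‖v x‖) := by ring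
      _ = ‖v z‖ ^ 2 * ∫ x, ‖K (z - x)‖ * ‖v x‖ := integral_const_mul _ _
      _ ≤ ‖v z‖ ^ 2 * C₀ := mul_le_mul_of_nonneg_left (slice_x_bd z) (by positivity)
  have D4 : Integrable (fun p : E × E => ⟪K (p.2 - p.1), v p.1⟫ * ⟪v p.2, v p.1⟫)
      ((volume : Measure E).prod volume) := by
    have islice : ∀ x : E, Integrable (fun z => ⟪K (z - x), v x⟫ * ⟪v z, v x⟫)
        (volume : Measure E) := by
      intro x
      refine Integrable.mono' ((slice_z x).const_mul (‖v x‖ ^ 2))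
        (((mKzR x).aestronglyMeasurable.inner aestronglyMeasurable_const).mul
          (hvm.inner aestronglyMeasurable_const))
        (Filter.Eventually.of_forall fun z => ?_)
      rw [Real.norm_eq_abs, abs_mul]
      calc |⟪K (z - x), v x⟫| * |⟪v z, v x⟫|
          ≤ (‖K (z - x)‖ * ‖v x‖) * (‖v z‖ * ‖v x‖) := by
            gcongr <;> [exact abs_real_inner_le_norm _ _; exact abs_real_inner_le_norm _ _]
        _ = ‖v x‖ ^ 2 * (‖K (z - x)‖ * ‖v z‖) := by ring
    refine integrable_prod_right_slices
      ((mprod_K.aestronglyMeasurable.inner mv1).mul (mv2.inner mv1))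
      (g := fun x => ‖v x‖ ^ 2 * C₀) (n2.mul_const _) islice (fun x => ?_)
    calc (∫ z, ‖⟪K (z - x), v x⟫ * ⟪v z, v x⟫‖)
        ≤ ∫ z, ‖v x‖ ^ 2 * (‖K (z - x)‖ * ‖v z‖) := by
          refine integral_mono (islice x).norm ((slice_z x).const_mul (‖v x‖ ^ 2)) fun z => ?_
          rw [Real.norm_eq_abs, abs_mul]
          calc |⟪K (z - x), v x⟫| * |⟪v z, v x⟫|
              ≤ (‖K (z - x)‖ * ‖v x‖) * (‖v z‖ * ‖v x‖) := by
                gcongr <;> [exact abs_real_inner_le_norm _ _; exact abs_real_inner_le_norm _ _]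
            _ = ‖v x‖ ^ 2 * (‖K (z - x)‖ * ‖v z‖) := by ring
      _ = ‖v x‖ ^ 2 * ∫ z, ‖K (z - x)‖ * ‖v z‖ := integral_const_mul _ _
      _ ≤ ‖v x‖ ^ 2 * C₀ := mul_le_mul_of_nonneg_left (slice_z_bd x) (by positivity)
  have IP1 : Integrable (fun x => ∫ z, ⟪K (z - x), v z⟫ * ‖v z‖ ^ 2) (volume : Measure E) :=
    D1.integral_prod_left
  have IP2 : Integrable (fun x => ∫ z, ⟪K (z - x), v x⟫ * ‖v z‖ ^ 2) (volume : Measure E) :=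
    D2.integral_prod_left
  have IP3 : Integrable (fun x => ∫ z, ⟪K (z - x), v z⟫ * ⟪v z, v x⟫) (volume : Measure E) :=
    D3.integral_prod_left
  have IP4 : Integrable (fun x => ∫ z, ⟪K (z - x), v x⟫ * ⟪v z, v x⟫) (volume : Measure E) :=
    D4.integral_prod_left
  have hP1 : (∫ x, ∫ z, ⟪K (z - x), v z⟫ * ‖v z‖ ^ 2) = 0 := by
    rw [integral_integral_swap (f := fun x z => ⟪K (z - x), v z⟫ * ‖v z‖ ^ 2) (by exact D1)]
    have hz : ∀ z : E, (∫ x, ⟪K (z - x), v z⟫ * ‖v z‖ ^ 2) = 0 := by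
      intro z
      rw [integral_mul_const]
      have h0 : (∫ x, ⟪K (z - x), v z⟫) = 0 := by
        have heq : (fun x => ⟪K (z - x), v z⟫) = fun x => ⟪v z, K (z - x)⟫ :=
          funext fun x => real_inner_comm _ _
        rw [heq, integral_inner (hKint.comp_sub_left z),
          integral_sub_left_eq_self K volume z, hK0, inner_zero_right]
      rw [h0, zero_mul]
    simp only [hz, integral_zero]
  have hP2 : (∫ x, ∫ z, ⟪K (z - x), v x⟫ * ‖v z‖ ^ 2) = 0 := by
    rw [integral_integral_swap (f := fun x z => ⟪K (z - x), v x⟫ * ‖v z‖ ^ 2) (by exact D2)]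
    have hz : ∀ z : E, (∫ x, ⟪K (z - x), v x⟫ * ‖v z‖ ^ 2) = 0 := by
      intro z
      rw [integral_mul_const]
      have h0 : (∫ x, ⟪K (z - x), v x⟫) = 0 := by
        have heq : (fun x => ⟪K (z - x), v x⟫) = fun x => ⟪v x, K (z - x)⟫ :=
          funext fun x => real_inner_comm _ _
        rw [heq]; exact hdivK z
      rw [h0, zero_mul]
    simp only [hz, integral_zero]
  have hR1 : ∀ x : E, (∫ z, ⟪v z, v x⟫ * ⟪v z, K (x - z)⟫)
      = -(∫ z, ⟪K (z - x), v z⟫ * ⟪v z, v x⟫) := by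
    intro x
    rw [← integral_neg]
    congr 1; funext z
    rw [show x - z = -(z - x) by abel, hKodd, inner_neg_right, real_inner_comm (v z) (K (z - x))]
    ring
  have hR2 : ∀ x : E, (∫ z, ⟪v x, v z⟫ * ⟪v x, K (x - z)⟫)
      = -(∫ z, ⟪K (z - x), v x⟫ * ⟪v z, v x⟫) := by
    intro x
    rw [← integral_neg]
    congr 1; funext z
    rw [show x - z = -(z - x) by abel, hKodd, inner_neg_right,
      real_inner_comm (v x) (K (z - x)), real_inner_comm (v x) (v z)]
    ring
  have JP3 : Integrable (fun x => 2 * ∫ z, ⟪K (z - x), v z⟫ * ⟪v z, v x⟫)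
      (volume : Measure E) := by exact IP3.const_mul 2
  have JP4 : Integrable (fun x => 2 * ∫ z, ⟪K (z - x), v x⟫ * ⟪v z, v x⟫)
      (volume : Measure E) := by exact IP4.const_mul 2
  have JP12 : Integrable (fun x => (∫ z, ⟪K (z - x), v z⟫ * ‖v z‖ ^ 2)
      - ∫ z, ⟪K (z - x), v x⟫ * ‖v z‖ ^ 2) (volume : Measure E) := by exact IP1.sub IP2
  have JP123 : Integrable (fun x => (∫ z, ⟪K (z - x), v z⟫ * ‖v z‖ ^ 2)
      - (∫ z, ⟪K (z - x), v x⟫ * ‖v z‖ ^ 2)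
      - 2 * ∫ z, ⟪K (z - x), v z⟫ * ⟪v z, v x⟫) (volume : Measure E) := by exact JP12.sub JP3
  simp only [key, hR1, hR2]
  rw [integral_add JP123 JP4, integral_sub JP12 JP3, integral_sub IP1 IP2,
    integral_const_mul, integral_const_mul, integral_neg, integral_neg, hP1, hP2]
  ring

end

end DRaux

/-- The Duchon–Robert identity:
`(1/2) J_ε(v) = ⟨∇·[v⊗v]_ε, v⟩ − ⟨v⊗v : ∇v_ε⟩` for a weakly divergence-free
`v ∈ L³ ∩ L²(ℝ³)` and an even mollifier `φ_ε`. -/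
theorem J_eps_identity
    (φ : EuclideanSpace ℝ (Fin 3) → ℝ)
    (hφ_smooth : ContDiff ℝ (⊤ : ℕ∞) φ)
    (hφ_supp : tsupport φ ⊆ Metric.ball 0 1)
    (hφ_even : ∀ x, φ (-x) = φ x)
    (hφ_int : ∫ x, φ x = 1)
    (ε : ℝ) (hε : 0 < ε)
    (φε : EuclideanSpace ℝ (Fin 3) → ℝ)
    (hφε : ∀ x, φε x = ε ^ (-3 : ℤ) * φ (ε⁻¹ • x))
    (v : EuclideanSpace ℝ (Fin 3) → EuclideanSpace ℝ (Fin 3))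
    (hv3 : MemLp v 3 (volume : Measure (EuclideanSpace ℝ (Fin 3))))
    (hv2 : MemLp v 2 (volume : Measure (EuclideanSpace ℝ (Fin 3))))
    (hdiv : ∀ ψ : EuclideanSpace ℝ (Fin 3) → ℝ, ContDiff ℝ (⊤ : ℕ∞) ψ → HasCompactSupport ψ →
      ∫ x, ⟪v x, gradient ψ x⟫ = 0) :
    (1 / 2 : ℝ) *
      (∫ x, ∫ ξ, ⟪gradient φε ξ, v (x + ξ) - v x⟫ * ‖v (x + ξ) - v x‖ ^ 2)
    = (∫ x, ∑ i : Fin 3, (∑ j : Fin 3,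
        fderiv ℝ (fun y => ∫ z, φε (y - z) * (v z i * v z j)) x
          (EuclideanSpace.single j 1)) * v x i)
      - ∫ x, ∑ i : Fin 3, ∑ j : Fin 3,
          v x i * v x j *
            fderiv ℝ (fun y => ∫ z, φε (y - z) * v z i) x (EuclideanSpace.single j 1) := by
  have hφε_eq : φε = fun x => (ε : ℝ) ^ (-3 : ℤ) * φ (ε⁻¹ • x) := funext hφε
  have hsm : ContDiff ℝ (⊤ : ℕ∞) φε := by
    rw [hφε_eq]
    exact contDiff_const.mul (hφ_smooth.comp (contDiff_id.const_smul ε⁻¹))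
  have hsupp : HasCompactSupport φε := by
    apply HasCompactSupport.intro (isCompact_closedBall (0 : EuclideanSpace ℝ (Fin 3)) ε)
    intro x hx
    rw [hφε]
    have hmem : ε⁻¹ • x ∉ tsupport φ := by
      intro hmem
      have h1 := hφ_supp hmem
      rw [Metric.mem_ball, dist_zero_right, norm_smul, Real.norm_eq_abs,
        abs_of_pos (inv_pos.mpr hε)] at h1
      have hxball : ‖x‖ ≤ ε := by
        rw [inv_mul_eq_div] at h1
        exact le_of_lt ((div_lt_one hε).mp h1)
      exact hx (Metric.mem_closedBall.mpr (by rwa [dist_zero_right]))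
    rw [image_eq_zero_of_notMem_tsupport hmem, mul_zero]
  have heven : ∀ x, φε (-x) = φε x := fun x => by rw [hφε, hφε, smul_neg, hφ_even]
  have hdiff : Differentiable ℝ φε := hsm.differentiable (by simp)
  have hinner : ∀ u w : EuclideanSpace ℝ (Fin 3), ⟪gradient φε u, w⟫ = fderiv ℝ φε u w :=
    fun u w => DRaux.inner_gradient φε u w
  have hKc : Continuous (gradient φε) := by
    unfold gradient
    exact (LinearIsometryEquiv.continuous _).comp (hsm.continuous_fderiv (by simp))
  have hKs : HasCompactSupport (gradient φε) := by
    unfold gradient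
    exact (hsupp.fderiv ℝ).comp_left (by simp)
  have hKodd : ∀ u, gradient φε (-u) = -gradient φε u := by
    intro u
    have h1 : HasFDerivAt (fun x : EuclideanSpace ℝ (Fin 3) => φε (-x))
        ((fderiv ℝ φε (-u)).comp (-(ContinuousLinearMap.id ℝ (EuclideanSpace ℝ (Fin 3))))) u :=
      ((hdiff (-u)).hasFDerivAt).comp u ((hasFDerivAt_id u).neg)
    rw [show (fun x : EuclideanSpace ℝ (Fin 3) => φε (-x)) = φε from funext heven] at h1
    have h3 := h1.fderiv
    refine ext_inner_right ℝ fun w => ?_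
    rw [hinner, inner_neg_left, hinner, h3]
    simp
  have hdivK : ∀ x, ∫ z, ⟪v z, gradient φε (x - z)⟫ = 0 := by
    intro x
    have hψsm : ContDiff ℝ (⊤ : ℕ∞) (fun z : EuclideanSpace ℝ (Fin 3) => φε (x - z)) :=
      hsm.comp (contDiff_const.sub contDiff_id)
    have hψsupp : HasCompactSupport (fun z : EuclideanSpace ℝ (Fin 3) => φε (x - z)) :=
      hsupp.comp_homeomorph (Homeomorph.subLeft x)
    have hd := hdiv _ hψsm hψsupp
    have hgradψ : ∀ z, gradient (fun z : EuclideanSpace ℝ (Fin 3) => φε (x - z)) z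
        = -gradient φε (x - z) := by
      intro z
      have h1 : HasFDerivAt (fun z : EuclideanSpace ℝ (Fin 3) => φε (x - z))
          ((fderiv ℝ φε (x - z)).comp
            (-(ContinuousLinearMap.id ℝ (EuclideanSpace ℝ (Fin 3))))) z :=
        ((hdiff (x - z)).hasFDerivAt).comp z ((hasFDerivAt_id z).const_sub x)
      have h2 : HasGradientAt (fun z : EuclideanSpace ℝ (Fin 3) => φε (x - z))
          (-gradient φε (x - z)) z := by
        rw [hasGradientAt_iff_hasFDerivAt]
        refine h1.congr_fderiv (ContinuousLinearMap.ext fun w => ?_)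
        rw [InnerProductSpace.toDual_apply_apply, inner_neg_left, hinner]
        simp
      exact h2.gradient
    have heq2 : (fun z => ⟪v z, gradient
        (fun z : EuclideanSpace ℝ (Fin 3) => φε (x - z)) z⟫)
        = fun z => -⟪v z, gradient φε (x - z)⟫ := by
      funext z; rw [hgradψ z, inner_neg_right]
    rw [heq2, integral_neg, neg_eq_zero] at hd
    exact hd
  have core := DRaux.DRcore (gradient φε) hKc hKs hKodd v hv3 hv2 hdivK
  -- measurability and integrability facts for the right-hand side
  have hvm : AEStronglyMeasurable v (volume : Measure (EuclideanSpace ℝ (Fin 3))) :=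
    hv2.aestronglyMeasurable
  obtain ⟨C, hC⟩ := hKc.bounded_above_of_compact_support hKs
  have hK2 : Integrable (fun u => ‖gradient φε u‖ ^ 2)
      (volume : Measure (EuclideanSpace ℝ (Fin 3))) :=
    (hKc.norm.pow 2).integrable_of_hasCompactSupport
      (hKs.mono (fun u hu => by simpa using hu))
  have n2 : Integrable (fun z => ‖v z‖ ^ 2) (volume : Measure (EuclideanSpace ℝ (Fin 3))) := by
    have h := hv2.integrable_norm_rpow (by norm_num) (by norm_num)
    have heq : (fun z : EuclideanSpace ℝ (Fin 3) => ‖v z‖ ^ (2 : ℕ))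
        = fun z => ‖v z‖ ^ ((2 : ℝ≥0∞)).toReal := by
      funext z
      rw [ENNReal.toReal_ofNat, show ((2 : ℝ)) = ((2 : ℕ) : ℝ) by norm_num, Real.rpow_natCast]
    rw [heq]; exact h
  have coordm : ∀ i : Fin 3, AEStronglyMeasurable (fun z => v z i)
      (volume : Measure (EuclideanSpace ℝ (Fin 3))) := fun i => by
    simpa using (EuclideanSpace.proj i).continuous.comp_aestronglyMeasurable hvm
  have hij_int : ∀ i j : Fin 3, Integrable (fun z => v z i * v z j)
      (volume : Measure (EuclideanSpace ℝ (Fin 3))) := by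
    intro i j
    refine Integrable.mono' n2 ((coordm i).mul (coordm j))
      (Filter.Eventually.of_forall fun z => ?_)
    rw [Real.norm_eq_abs, abs_mul]
    calc |v z i| * |v z j| ≤ ‖v z‖ * ‖v z‖ :=
          mul_le_mul (DRaux.coord_le _ _) (DRaux.coord_le _ _) (abs_nonneg _) (norm_nonneg _)
      _ = ‖v z‖ ^ 2 := (sq ‖v z‖).symm
  have hij_loc : ∀ i j : Fin 3, LocallyIntegrable (fun z => v z i * v z j)
      (volume : Measure (EuclideanSpace ℝ (Fin 3))) := fun i j => (hij_int i j).locallyIntegrable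
  have hi_loc : ∀ i : Fin 3, LocallyIntegrable (fun z => v z i)
      (volume : Measure (EuclideanSpace ℝ (Fin 3))) := by
    intro i
    have hmem : MemLp (fun z => v z i) 2 (volume : Measure (EuclideanSpace ℝ (Fin 3))) := by
      refine MemLp.of_le hv2 (coordm i) (Filter.Eventually.of_forall fun z => ?_)
      rw [Real.norm_eq_abs]
      exact DRaux.coord_le (v z) i
    exact hmem.locallyIntegrable (by norm_num)
  have sliceK : ∀ x : EuclideanSpace ℝ (Fin 3),
      Integrable (fun z => ‖gradient φε (x - z)‖ * ‖v z‖)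
        (volume : Measure (EuclideanSpace ℝ (Fin 3))) := by
    intro x
    refine Integrable.mono' (((hK2.comp_sub_left x).add n2).div_const 2)
      (((hKc.comp (continuous_const.sub continuous_id)).norm.aestronglyMeasurable).mul hvm.norm)
      (Filter.Eventually.of_forall fun z => ?_)
    rw [Real.norm_eq_abs]
    exact DRaux.amgm _ _
  -- identification of the first RHS term
  have hterm1 : ∀ x : EuclideanSpace ℝ (Fin 3),
      (∑ i : Fin 3, (∑ j : Fin 3,
        fderiv ℝ (fun y => ∫ z, φε (y - z) * (v z i * v z j)) x
          (EuclideanSpace.single j 1)) * v x i)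
      = ∫ z, ⟪v z, v x⟫ * ⟪v z, gradient φε (x - z)⟫ := by
    intro x
    have hfij : ∀ i j : Fin 3,
        fderiv ℝ (fun y => ∫ z, φε (y - z) * (v z i * v z j)) x (EuclideanSpace.single j 1)
        = ∫ z, v z i * v z j * gradient φε (x - z) j := by
      intro i j
      rw [DRaux.fderiv_mollify φε hsm hsupp _ (hij_loc i j) x _]
      congr 1; funext z
      rw [← hinner, EuclideanSpace.inner_single_right]
      simp [starRingEnd_apply, mul_assoc]
    have hint : ∀ i j : Fin 3,
        Integrable (fun z => v z i * v z j * gradient φε (x - z) j * v x i)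
          (volume : Measure (EuclideanSpace ℝ (Fin 3))) := by
      intro i j
      refine Integrable.mono' (n2.const_mul (C * ‖v x‖))
        ((((coordm i).mul (coordm j)).mul
          ((((EuclideanSpace.proj j).continuous.comp
            (hKc.comp (continuous_const.sub continuous_id))).aestronglyMeasurable))).mul
          aestronglyMeasurable_const)
        (Filter.Eventually.of_forall fun z => ?_)
      have hb : ∀ a : EuclideanSpace ℝ (Fin 3), ∀ k : Fin 3, |a k| ≤ ‖a‖ := DRaux.coord_le
      rw [Real.norm_eq_abs, abs_mul, abs_mul, abs_mul]
      calc |v z i| * |v z j| * |gradient φε (x - z) j| * |v x i|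
          ≤ ‖v z‖ * ‖v z‖ * ‖gradient φε (x - z)‖ * ‖v x‖ := by
            gcongr <;> first | exact hb _ _ | exact (abs_nonneg _)
        _ ≤ ‖v z‖ * ‖v z‖ * C * ‖v x‖ := by
            gcongr
            exact hC _
        _ = C * ‖v x‖ * ‖v z‖ ^ 2 := by ring
    have hswap1 : ∀ i : Fin 3,
        (∑ j : Fin 3, ∫ z, v z i * v z j * gradient φε (x - z) j * v x i)
        = ∫ z, ∑ j : Fin 3, v z i * v z j * gradient φε (x - z) j * v x i :=
      fun i => (integral_finset_sum Finset.univ fun j _ => hint i j).symm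
    have hswap2 : (∑ i : Fin 3, ∫ z, ∑ j : Fin 3,
          v z i * v z j * gradient φε (x - z) j * v x i)
        = ∫ z, ∑ i : Fin 3, ∑ j : Fin 3, v z i * v z j * gradient φε (x - z) j * v x i :=
      (integral_finset_sum Finset.univ fun i _ =>
        integrable_finset_sum Finset.univ fun j _ => hint i j).symm
    calc (∑ i : Fin 3, (∑ j : Fin 3,
          fderiv ℝ (fun y => ∫ z, φε (y - z) * (v z i * v z j)) x
            (EuclideanSpace.single j 1)) * v x i)
        = ∑ i : Fin 3, ∑ j : Fin 3, ∫ z,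
            v z i * v z j * gradient φε (x - z) j * v x i := by
          simp only [hfij, Finset.sum_mul, ← integral_mul_const]
      _ = ∫ z, ∑ i : Fin 3, ∑ j : Fin 3, v z i * v z j * gradient φε (x - z) j * v x i := by
          simp only [hswap1, hswap2]
      _ = ∫ z, ⟪v z, v x⟫ * ⟪v z, gradient φε (x - z)⟫ := by
          congr 1; funext z
          rw [DRaux.inner_sum_eq (v z) (v x),
            DRaux.inner_sum_eq (v z) (gradient φε (x - z)), Finset.sum_mul_sum]
          exact Finset.sum_congr rfl fun i _ => Finset.sum_congr rfl fun j _ => by ring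
  -- identification of the second RHS term
  have hterm2 : ∀ x : EuclideanSpace ℝ (Fin 3),
      (∑ i : Fin 3, ∑ j : Fin 3, v x i * v x j *
        fderiv ℝ (fun y => ∫ z, φε (y - z) * v z i) x (EuclideanSpace.single j 1))
      = ∫ z, ⟪v x, v z⟫ * ⟪v x, gradient φε (x - z)⟫ := by
    intro x
    have hfij : ∀ i j : Fin 3,
        fderiv ℝ (fun y => ∫ z, φε (y - z) * v z i) x (EuclideanSpace.single j 1)
        = ∫ z, v z i * gradient φε (x - z) j := by
      intro i j
      rw [DRaux.fderiv_mollify φε hsm hsupp _ (hi_loc i) x _]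
      congr 1; funext z
      rw [← hinner, EuclideanSpace.inner_single_right]
      simp [starRingEnd_apply]
    have hint : ∀ i j : Fin 3,
        Integrable (fun z => v x i * v x j * (v z i * gradient φε (x - z) j))
          (volume : Measure (EuclideanSpace ℝ (Fin 3))) := by
      intro i j
      refine Integrable.mono' ((sliceK x).const_mul (‖v x‖ ^ 2))
        (aestronglyMeasurable_const.mul ((coordm i).mul
          ((((EuclideanSpace.proj j).continuous.comp
            (hKc.comp (continuous_const.sub continuous_id))).aestronglyMeasurable))))
        (Filter.Eventually.of_forall fun z => ?_)
      have hb : ∀ a : EuclideanSpace ℝ (Fin 3), ∀ k : Fin 3, |a k| ≤ ‖a‖ := DRaux.coord_le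
      rw [Real.norm_eq_abs, abs_mul, abs_mul, abs_mul]
      calc |v x i| * |v x j| * (|v z i| * |gradient φε (x - z) j|)
          ≤ ‖v x‖ * ‖v x‖ * (‖v z‖ * ‖gradient φε (x - z)‖) := by
            gcongr <;> first | exact hb _ _ | exact (abs_nonneg _)
        _ = ‖v x‖ ^ 2 * (‖gradient φε (x - z)‖ * ‖v z‖) := by ring
    have hswap1 : ∀ i : Fin 3,
        (∑ j : Fin 3, ∫ z, v x i * v x j * (v z i * gradient φε (x - z) j))
        = ∫ z, ∑ j : Fin 3, v x i * v x j * (v z i * gradient φε (x - z) j) :=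
      fun i => (integral_finset_sum Finset.univ fun j _ => hint i j).symm
    have hswap2 : (∑ i : Fin 3, ∫ z, ∑ j : Fin 3,
          v x i * v x j * (v z i * gradient φε (x - z) j))
        = ∫ z, ∑ i : Fin 3, ∑ j : Fin 3, v x i * v x j * (v z i * gradient φε (x - z) j) :=
      (integral_finset_sum Finset.univ fun i _ =>
        integrable_finset_sum Finset.univ fun j _ => hint i j).symm
    calc (∑ i : Fin 3, ∑ j : Fin 3, v x i * v x j *
          fderiv ℝ (fun y => ∫ z, φε (y - z) * v z i) x (EuclideanSpace.single j 1))
        = ∑ i : Fin 3, ∑ j : Fin 3, ∫ z,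
            v x i * v x j * (v z i * gradient φε (x - z) j) := by
          simp only [hfij, ← integral_const_mul]
      _ = ∫ z, ∑ i : Fin 3, ∑ j : Fin 3, v x i * v x j * (v z i * gradient φε (x - z) j) := by
          simp only [hswap1, hswap2]
      _ = ∫ z, ⟪v x, v z⟫ * ⟪v x, gradient φε (x - z)⟫ := by
          congr 1; funext z
          rw [DRaux.inner_sum_eq (v x) (v z),
            DRaux.inner_sum_eq (v x) (gradient φε (x - z)), Finset.sum_mul_sum]
          exact Finset.sum_congr rfl fun i _ => Finset.sum_congr rfl fun j _ => by ring
  have e1 : (∫ x, ∑ i : Fin 3, (∑ j : Fin 3,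
        fderiv ℝ (fun y => ∫ z, φε (y - z) * (v z i * v z j)) x
          (EuclideanSpace.single j 1)) * v x i)
      = ∫ x, ∫ z, ⟪v z, v x⟫ * ⟪v z, gradient φε (x - z)⟫ :=
    integral_congr_ae (Filter.Eventually.of_forall hterm1)
  have e2 : (∫ x, ∑ i : Fin 3, ∑ j : Fin 3, v x i * v x j *
        fderiv ℝ (fun y => ∫ z, φε (y - z) * v z i) x (EuclideanSpace.single j 1))
      = ∫ x, ∫ z, ⟪v x, v z⟫ * ⟪v x, gradient φε (x - z)⟫ :=
    integral_congr_ae (Filter.Eventually.of_forall hterm2)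
  rw [e1, e2]
  exact core
end

section
/- Let u ∈ L³((0,T)×ℝ³;ℝ³) satisfy ∫₀^T ∫_{ℝ³}∫_{ℝ³} |u(t,x)-u(t,y)|³ / |x-y|^{4+δ} dx dy dt < ∞ for some δ > 0. Then with J_ε as above, ∫₀^T |J_ε(u(t))| dt ≤ c ε^δ for a constant c independent of ε; in particular ∫₀^T |J_ε(u(t))| dt → 0 as ε → 0. -/
open MeasureTheory RealInnerProductSpace Filter

private lemma ofReal_abs_integral_le {α : Type*} [MeasurableSpace α] (μ : Measure α) (h : α → ℝ) :
    ENNReal.ofReal (abs (∫ a, h a ∂μ)) ≤ ∫⁻ a, ENNReal.ofReal (abs (h a)) ∂μ := by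
  calc ENNReal.ofReal (abs (∫ a, h a ∂μ)) = ENNReal.ofReal ‖∫ a, h a ∂μ‖ := by
        rw [Real.norm_eq_abs]
    _ ≤ ENNReal.ofReal (∫⁻ a, ENNReal.ofReal ‖h a‖ ∂μ).toReal :=
        ENNReal.ofReal_le_ofReal (norm_integral_le_lintegral_norm h)
    _ ≤ ∫⁻ a, ENNReal.ofReal ‖h a‖ ∂μ := ENNReal.ofReal_toReal_le
    _ = ∫⁻ a, ENNReal.ofReal (abs (h a)) ∂μ := by simp [Real.norm_eq_abs]

private lemma integral_abs_le_toReal {α : Type*} [MeasurableSpace α] (μ : Measure α) (f : α → ℝ) :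
    (∫ a, |f a| ∂μ) ≤ (∫⁻ a, ENNReal.ofReal (abs (f a)) ∂μ).toReal := by
  calc (∫ a, |f a| ∂μ) ≤ ‖∫ a, |f a| ∂μ‖ := le_abs_self _
    _ ≤ (∫⁻ a, ENNReal.ofReal ‖|f a|‖ ∂μ).toReal := norm_integral_le_lintegral_norm _
    _ = (∫⁻ a, ENNReal.ofReal (abs (f a)) ∂μ).toReal := by simp [Real.norm_eq_abs, abs_abs]

/-- If `∫₀^T ∫∫ |u(t,x)-u(t,y)|³/|x-y|^{4+δ} < ∞` for some `δ > 0`, then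
`∫₀^T |J_ε(u(t))| dt ≤ c ε^δ`; in particular it tends to `0` as `ε → 0⁺`. -/
theorem J_eps_bound_of_Sobolev_condition
    (T δ : ℝ) (hT : 0 < T) (hδ : 0 < δ)
    (u : ℝ → EuclideanSpace ℝ (Fin 3) → EuclideanSpace ℝ (Fin 3))
    (hu3 : MemLp (fun p : ℝ × EuclideanSpace ℝ (Fin 3) => u p.1 p.2) 3
      ((volume.restrict (Set.Ioo 0 T)).prod (volume : Measure (EuclideanSpace ℝ (Fin 3)))))
    (hI : (∫⁻ t in Set.Ioo (0:ℝ) T, ∫⁻ x, ∫⁻ y,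
      ENNReal.ofReal (‖u t x - u t y‖ ^ 3 / ‖x - y‖ ^ ((4:ℝ) + δ))) < ⊤)
    (φ : EuclideanSpace ℝ (Fin 3) → ℝ)
    (hφ_smooth : ContDiff ℝ (⊤ : ℕ∞) φ)
    (hφ_supp : tsupport φ ⊆ Metric.ball 0 1)
    (hφ_even : ∀ x, φ (-x) = φ x)
    (hφ_int : ∫ x, φ x = 1)
    (φε : ℝ → EuclideanSpace ℝ (Fin 3) → ℝ)
    (hφε : ∀ ε > 0, ∀ x, φε ε x = ε ^ (-3 : ℤ) * φ (ε⁻¹ • x)) :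
    (∃ c : ℝ, ∀ ε > 0,
      (∫ t in (0:ℝ)..T,
        |∫ x, ∫ ξ, ⟪gradient (φε ε) ξ, u t (x + ξ) - u t x⟫ * ‖u t (x + ξ) - u t x‖ ^ 2|)
        ≤ c * ε ^ δ) ∧
    Tendsto
      (fun ε : ℝ => ∫ t in (0:ℝ)..T,
        |∫ x, ∫ ξ, ⟪gradient (φε ε) ξ, u t (x + ξ) - u t x⟫ * ‖u t (x + ξ) - u t x‖ ^ 2|)
      (nhdsWithin 0 (Set.Ioi 0)) (nhds 0) := by
  have hφdiff : Differentiable ℝ φ := hφ_smooth.differentiable (by simp)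
  have hφcs : HasCompactSupport φ :=
    (isCompact_closedBall (0 : EuclideanSpace ℝ (Fin 3)) 1).of_isClosed_subset
      (isClosed_tsupport φ) (hφ_supp.trans Metric.ball_subset_closedBall)
  have hfc : Continuous fun y : EuclideanSpace ℝ (Fin 3) => ‖fderiv ℝ φ y‖ :=
    (hφ_smooth.continuous_fderiv (by simp)).norm
  obtain ⟨y₀, hy₀⟩ := hfc.exists_forall_ge_of_hasCompactSupport (hφcs.fderiv (𝕜 := ℝ)).norm
  set K : ℝ := max ‖fderiv ℝ φ y₀‖ 0 with hKdef
  have hK0 : 0 ≤ K := le_max_right _ _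
  have hKb : ∀ y, ‖fderiv ℝ φ y‖ ≤ K := fun y => (hy₀ y).trans (le_max_left _ _)
  have gradnorm : ∀ (f : EuclideanSpace ℝ (Fin 3) → ℝ) x, ‖gradient f x‖ = ‖fderiv ℝ f x‖ := by
    intro f x; rw [gradient]; exact LinearIsometryEquiv.norm_map _ _
  set I : ENNReal := ∫⁻ t in Set.Ioo (0:ℝ) T, ∫⁻ x, ∫⁻ y,
      ENNReal.ofReal (‖u t x - u t y‖ ^ 3 / ‖x - y‖ ^ ((4:ℝ) + δ)) with hIdef
  have hIne : I ≠ ⊤ := hI.ne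
  -- The main bound, for every ε > 0.
  have bound : ∀ ε > (0:ℝ),
      (∫ t in (0:ℝ)..T,
        |∫ x, ∫ ξ, ⟪gradient (φε ε) ξ, u t (x + ξ) - u t x⟫ * ‖u t (x + ξ) - u t x‖ ^ 2|)
        ≤ (K * I.toReal) * ε ^ δ := by
    intro ε hε
    have hεne : ε ≠ 0 := hε.ne'
    set L : EuclideanSpace ℝ (Fin 3) →L[ℝ] EuclideanSpace ℝ (Fin 3) :=
      ε⁻¹ • ContinuousLinearMap.id ℝ (EuclideanSpace ℝ (Fin 3)) with hLdef
    -- the derivative of the rescaled mollifier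
    have hfd : ∀ ξ, HasFDerivAt (φε ε)
        ((ε ^ (-3:ℤ)) • ((fderiv ℝ φ (ε⁻¹ • ξ)).comp L)) ξ := by
      intro ξ
      have hfun : φε ε = fun x => ε ^ (-3:ℤ) * φ (ε⁻¹ • x) := funext (hφε ε hε)
      rw [hfun]
      have hL : HasFDerivAt (fun x : EuclideanSpace ℝ (Fin 3) => ε⁻¹ • x) L ξ := by
        exact L.hasFDerivAt (x := ξ)
      exact ((hφdiff (ε⁻¹ • ξ)).hasFDerivAt.comp ξ hL).const_mul _
    -- bound on the derivative
    have hfb : ∀ ξ, ‖fderiv ℝ (φε ε) ξ‖ ≤ K * (ε ^ (4:ℕ))⁻¹ := by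
      intro ξ
      rw [(hfd ξ).fderiv]
      have h3 : ‖ε ^ (-3:ℤ)‖ = (ε ^ (3:ℕ))⁻¹ := by
        rw [Real.norm_eq_abs, abs_of_pos (zpow_pos hε _), zpow_neg]
        norm_cast
      have h2 : ‖L‖ ≤ ε⁻¹ := by
        have hs := ContinuousLinearMap.opNorm_smul_le ε⁻¹
          (ContinuousLinearMap.id ℝ (EuclideanSpace ℝ (Fin 3)))
        refine hs.trans ?_
        calc ‖ε⁻¹‖ * ‖ContinuousLinearMap.id ℝ (EuclideanSpace ℝ (Fin 3))‖ ≤ ‖ε⁻¹‖ * 1 :=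
              mul_le_mul_of_nonneg_left ContinuousLinearMap.norm_id_le (norm_nonneg _)
          _ = ε⁻¹ := by rw [mul_one, Real.norm_eq_abs, abs_inv, abs_of_pos hε]
      have hM : ‖(fderiv ℝ φ (ε⁻¹ • ξ)).comp L‖ ≤ K * ε⁻¹ := by
        refine (ContinuousLinearMap.opNorm_comp_le _ _).trans ?_
        exact mul_le_mul (hKb _) h2 (norm_nonneg _) hK0
      calc ‖(ε ^ (-3:ℤ)) • ((fderiv ℝ φ (ε⁻¹ • ξ)).comp L)‖
          ≤ ‖ε ^ (-3:ℤ)‖ * ‖(fderiv ℝ φ (ε⁻¹ • ξ)).comp L‖ :=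
            ContinuousLinearMap.opNorm_smul_le _ _
        _ ≤ (ε ^ (3:ℕ))⁻¹ * (K * ε⁻¹) := by
            rw [h3]
            exact mul_le_mul_of_nonneg_left hM (by positivity)
        _ = K * (ε ^ (4:ℕ))⁻¹ := by
            rw [pow_succ, mul_inv]
            ring
    -- vanishing of the derivative away from the ball of radius ε
    have hfz : ∀ ξ : EuclideanSpace ℝ (Fin 3), ε < ‖ξ‖ → fderiv ℝ (φε ε) ξ = 0 := by
      intro ξ hξ
      have hev : φε ε =ᶠ[nhds ξ] fun _ => (0:ℝ) := by
        filter_upwards [(isOpen_lt continuous_const continuous_norm).mem_nhds hξ] with x hx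
        rw [hφε ε hε]
        have hx1 : ε⁻¹ • x ∉ tsupport φ := by
          intro hmem
          have h1 : ‖ε⁻¹ • x‖ < 1 := mem_ball_zero_iff.mp (hφ_supp hmem)
          rw [norm_smul, norm_inv, Real.norm_eq_abs, abs_of_pos hε] at h1
          have h2 : (1:ℝ) < ε⁻¹ * ‖x‖ := by
            rw [← div_eq_inv_mul]; exact (one_lt_div hε).mpr hx
          linarith
        rw [image_eq_zero_of_notMem_tsupport hx1, mul_zero]
      rw [hev.fderiv_eq]
      simp
    -- exponent arithmetic
    have hkey_exp : ∀ ξ : EuclideanSpace ℝ (Fin 3), 0 < ‖ξ‖ → ‖ξ‖ ≤ ε →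
        (ε ^ (4:ℕ))⁻¹ ≤ ε ^ δ / ‖ξ‖ ^ ((4:ℝ) + δ) := by
      intro ξ h1 h2
      have e1 : ((ε ^ (4:ℕ) : ℝ))⁻¹ = ε ^ (-(4:ℝ)) := by
        rw [Real.rpow_neg hε.le]
        norm_cast
      have e2 : ε ^ (-(4:ℝ)) = ε ^ δ * (ε ^ ((4:ℝ) + δ))⁻¹ := by
        rw [← Real.rpow_neg hε.le, ← Real.rpow_add hε]
        have h4 : δ + -((4:ℝ) + δ) = -(4:ℝ) := by ring
        rw [h4]
      rw [e1, e2, div_eq_mul_inv]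
      refine mul_le_mul_of_nonneg_left ?_ (Real.rpow_nonneg hε.le _)
      exact inv_anti₀ (Real.rpow_pos_of_pos h1 _)
        (Real.rpow_le_rpow h1.le h2 (by positivity))
    -- pointwise bound of the integrand
    have hpt : ∀ t x ξ, |⟪gradient (φε ε) ξ, u t (x + ξ) - u t x⟫ * ‖u t (x + ξ) - u t x‖ ^ 2|
        ≤ K * ε ^ δ * (‖u t (x + ξ) - u t x‖ ^ 3 / ‖ξ‖ ^ ((4:ℝ) + δ)) := by
      intro t x ξ
      rcases le_or_gt ‖ξ‖ ε with hle | hgt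
      · by_cases hξ0 : ξ = 0
        · simp [hξ0]
        · have hξpos : 0 < ‖ξ‖ := norm_pos_iff.mpr hξ0
          calc |⟪gradient (φε ε) ξ, u t (x + ξ) - u t x⟫ * ‖u t (x + ξ) - u t x‖ ^ 2|
              = |⟪gradient (φε ε) ξ, u t (x + ξ) - u t x⟫| * ‖u t (x + ξ) - u t x‖ ^ 2 := by
                rw [abs_mul, abs_of_nonneg (by positivity : (0:ℝ) ≤ ‖u t (x + ξ) - u t x‖ ^ 2)]
            _ ≤ (‖gradient (φε ε) ξ‖ * ‖u t (x + ξ) - u t x‖) * ‖u t (x + ξ) - u t x‖ ^ 2 :=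
                mul_le_mul_of_nonneg_right (abs_real_inner_le_norm _ _) (by positivity)
            _ = ‖fderiv ℝ (φε ε) ξ‖ * ‖u t (x + ξ) - u t x‖ ^ 3 := by
                rw [gradnorm]; ring
            _ ≤ (K * (ε ^ (4:ℕ))⁻¹) * ‖u t (x + ξ) - u t x‖ ^ 3 :=
                mul_le_mul_of_nonneg_right (hfb ξ) (by positivity)
            _ ≤ K * ε ^ δ * (‖u t (x + ξ) - u t x‖ ^ 3 / ‖ξ‖ ^ ((4:ℝ) + δ)) := by
                have h := hkey_exp ξ hξpos hle
                calc K * (ε ^ (4:ℕ))⁻¹ * ‖u t (x + ξ) - u t x‖ ^ 3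
                    ≤ K * (ε ^ δ / ‖ξ‖ ^ ((4:ℝ) + δ)) * ‖u t (x + ξ) - u t x‖ ^ 3 :=
                      mul_le_mul_of_nonneg_right
                        (mul_le_mul_of_nonneg_left h hK0) (by positivity)
                  _ = K * ε ^ δ * (‖u t (x + ξ) - u t x‖ ^ 3 / ‖ξ‖ ^ ((4:ℝ) + δ)) := by ring
      · have hg0 : gradient (φε ε) ξ = 0 := by
          simp [gradient, hfz ξ hgt]
        rw [hg0]
        simp only [inner_zero_left, zero_mul, abs_zero]
        have h0 : (0:ℝ) ≤ ‖u t (x + ξ) - u t x‖ ^ 3 / ‖ξ‖ ^ ((4:ℝ) + δ) := by positivity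
        exact mul_nonneg (mul_nonneg hK0 (Real.rpow_nonneg hε.le _)) h0
    -- abbreviations
    set A : ℝ → ℝ := fun t => ∫ x, ∫ ξ,
      ⟪gradient (φε ε) ξ, u t (x + ξ) - u t x⟫ * ‖u t (x + ξ) - u t x‖ ^ 2 with hAdef
    set G : ℝ → ENNReal := fun t => ∫⁻ x, ∫⁻ y,
      ENNReal.ofReal (‖u t x - u t y‖ ^ 3 / ‖x - y‖ ^ ((4:ℝ) + δ)) with hGdef
    have hIG : I = ∫⁻ t in Set.Ioo (0:ℝ) T, G t := hIdef
    -- the bound for fixed t, in ENNReal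
    have key : ∀ t, ENNReal.ofReal (abs (A t)) ≤ ENNReal.ofReal (K * ε ^ δ) * G t := by
      intro t
      calc ENNReal.ofReal (abs (A t))
          ≤ ∫⁻ x, ENNReal.ofReal (abs (∫ ξ,
              ⟪gradient (φε ε) ξ, u t (x + ξ) - u t x⟫ * ‖u t (x + ξ) - u t x‖ ^ 2)) :=
            ofReal_abs_integral_le _ _
        _ ≤ ∫⁻ x, ∫⁻ ξ, ENNReal.ofReal (abs
              (⟪gradient (φε ε) ξ, u t (x + ξ) - u t x⟫ * ‖u t (x + ξ) - u t x‖ ^ 2)) :=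
            lintegral_mono fun x => ofReal_abs_integral_le _ _
        _ ≤ ∫⁻ x, ∫⁻ ξ, ENNReal.ofReal (K * ε ^ δ) *
              ENNReal.ofReal (‖u t (x + ξ) - u t x‖ ^ 3 / ‖ξ‖ ^ ((4:ℝ) + δ)) := by
            refine lintegral_mono fun x => lintegral_mono fun ξ => ?_
            rw [← ENNReal.ofReal_mul (mul_nonneg hK0 (Real.rpow_nonneg hε.le _))]
            exact ENNReal.ofReal_le_ofReal (hpt t x ξ)
        _ = ∫⁻ x, ENNReal.ofReal (K * ε ^ δ) *
              ∫⁻ ξ, ENNReal.ofReal (‖u t (x + ξ) - u t x‖ ^ 3 / ‖ξ‖ ^ ((4:ℝ) + δ)) := by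
            simp_rw [lintegral_const_mul' (ENNReal.ofReal (K * ε ^ δ)) _ ENNReal.ofReal_ne_top]
        _ = ENNReal.ofReal (K * ε ^ δ) * ∫⁻ x,
              ∫⁻ ξ, ENNReal.ofReal (‖u t (x + ξ) - u t x‖ ^ 3 / ‖ξ‖ ^ ((4:ℝ) + δ)) :=
            lintegral_const_mul' _ _ ENNReal.ofReal_ne_top
        _ = ENNReal.ofReal (K * ε ^ δ) * G t := by
            congr 1
            refine lintegral_congr fun x => ?_
            have hsub := lintegral_add_left_eq_self (μ := volume)
              (fun y => ENNReal.ofReal (‖u t x - u t y‖ ^ 3 / ‖x - y‖ ^ ((4:ℝ) + δ))) x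
            rw [← hsub]
            refine lintegral_congr fun ξ => ?_
            have h1 : x - (x + ξ) = -ξ := by abel
            rw [norm_sub_rev (u t (x + ξ)) (u t x), h1, norm_neg]
    -- integrate in time
    rw [intervalIntegral.integral_of_le hT.le]
    have h1 : (∫ t in Set.Ioc (0:ℝ) T, |A t|)
        ≤ (∫⁻ t in Set.Ioc (0:ℝ) T, ENNReal.ofReal (abs (A t))).toReal :=
      integral_abs_le_toReal _ _
    have hIoc : (∫⁻ t in Set.Ioc (0:ℝ) T, ENNReal.ofReal (abs (A t)))
        = ∫⁻ t in Set.Ioo (0:ℝ) T, ENNReal.ofReal (abs (A t)) := by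
      rw [Measure.restrict_congr_set Ioo_ae_eq_Ioc.symm]
    have h3 : (∫⁻ t in Set.Ioo (0:ℝ) T, ENNReal.ofReal (abs (A t)))
        ≤ ENNReal.ofReal (K * ε ^ δ) * I := by
      calc (∫⁻ t in Set.Ioo (0:ℝ) T, ENNReal.ofReal (abs (A t)))
          ≤ ∫⁻ t in Set.Ioo (0:ℝ) T, ENNReal.ofReal (K * ε ^ δ) * G t :=
            lintegral_mono fun t => key t
        _ = ENNReal.ofReal (K * ε ^ δ) * ∫⁻ t in Set.Ioo (0:ℝ) T, G t :=
            lintegral_const_mul' _ _ ENNReal.ofReal_ne_top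
        _ = ENNReal.ofReal (K * ε ^ δ) * I := by rw [← hIG]
    have hfin : ENNReal.ofReal (K * ε ^ δ) * I ≠ ⊤ :=
      ENNReal.mul_ne_top ENNReal.ofReal_ne_top hIne
    refine h1.trans ?_
    rw [hIoc]
    calc (∫⁻ t in Set.Ioo (0:ℝ) T, ENNReal.ofReal (abs (A t))).toReal
        ≤ (ENNReal.ofReal (K * ε ^ δ) * I).toReal := ENNReal.toReal_mono hfin h3
      _ = K * ε ^ δ * I.toReal := by
          rw [ENNReal.toReal_mul, ENNReal.toReal_ofReal
            (mul_nonneg hK0 (Real.rpow_nonneg hε.le _))]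
      _ = (K * I.toReal) * ε ^ δ := by ring
  refine ⟨⟨K * I.toReal, bound⟩, ?_⟩
  have hub : Tendsto (fun ε : ℝ => (K * I.toReal) * ε ^ δ) (nhdsWithin 0 (Set.Ioi 0)) (nhds 0) := by
    have h0 : Tendsto (fun ε : ℝ => ε ^ δ) (nhdsWithin 0 (Set.Ioi 0)) (nhds 0) := by
      have hc : ContinuousAt (fun x : ℝ => x ^ δ) 0 :=
        Real.continuousAt_rpow_const 0 δ (Or.inr hδ.le)
      have h1 := hc.tendsto
      rw [Real.zero_rpow hδ.ne'] at h1
      exact h1.mono_left nhdsWithin_le_nhds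
    simpa using h0.const_mul (K * I.toReal)
  refine tendsto_of_tendsto_of_tendsto_of_le_of_le' tendsto_const_nhds hub ?_ ?_
  · filter_upwards [self_mem_nhdsWithin] with ε hε
    exact intervalIntegral.integral_nonneg hT.le fun t _ => abs_nonneg _
  · filter_upwards [self_mem_nhdsWithin] with ε hε
    exact bound ε hε
end
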